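/- Let (P, x_L, x_R) and (Q, y_L, y_R) be finite oriented posets with weight functions into a commutative ring R. Then the up weight matrix of the glued oriented poset P↘Q (with left vertex x_L and right vertex y_R) satisfies M_w((P↘Q)↗) = M_w(P↘) · M_w(Q↗), where the right-hand side is the product of 2×2 matrices over R. -/

import Mathlib

open Classical Relation

noncomputable section

variable {R : Type*} [CommRing R]

/-- A finite set `I` is a lower set (order ideal) for the relation `r`. -/
def IsLowerSetRel {α : Type*} (r : α → α → Prop) (I : Finset α) : Prop :=
  ∀ x ∈ I, ∀ y, r y x → y ∈ I

/-- The sum of the weights `∏ i ∈ I, w i` over all lower sets `I` of the relation `r`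
satisfying the condition `C`.  Taking `C = fun _ => True` gives the weight polynomial. -/
def wSum {α : Type*} [Fintype α] (r : α → α → Prop) (w : α → R) (C : Finset α → Prop) : R :=
  ∑ I ∈ Finset.univ.filter (fun I : Finset α => IsLowerSetRel r I ∧ C I), ∏ i ∈ I, w i

/-- The down weight matrix `M_w(P↘)` of an oriented poset `(P, xL, xR)`. -/
def downMat {α : Type*} [Fintype α] (r : α → α → Prop) (w : α → R) (xL xR : α) :
    Matrix (Fin 2) (Fin 2) R :=
  !![wSum r w (fun _ => True), -wSum r w (fun I => xR ∈ I);
     wSum r w (fun I => xL ∉ I), -wSum r w (fun I => xR ∈ I ∧ xL ∉ I)]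

/-- The up weight matrix `M_w(P↗)` of an oriented poset `(P, xL, xR)`. -/
def upMat {α : Type*} [Fintype α] (r : α → α → Prop) (w : α → R) (xL xR : α) :
    Matrix (Fin 2) (Fin 2) R :=
  !![wSum r w (fun I => xR ∈ I), wSum r w (fun I => xR ∉ I);
     wSum r w (fun I => xR ∈ I ∧ xL ∉ I), wSum r w (fun I => xR ∉ I ∧ xL ∉ I)]

/-- The order relation of the glued poset `P↘Q` on the disjoint union `P ⊔ Q`:
elements of `P` (resp. `Q`) compare as in `P` (resp. `Q`), an element `a ∈ Q` lies below
`b ∈ P` iff `a ≤ yL` in `Q` and `xR ≤ b` in `P`, and no element of `P` lies below an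
element of `Q`. -/
def glueDown {α β : Type*} (rP : α → α → Prop) (rQ : β → β → Prop) (xR : α) (yL : β) :
    α ⊕ β → α ⊕ β → Prop
  | .inl a, .inl b => rP a b
  | .inr a, .inr b => rQ a b
  | .inr a, .inl b => rQ a yL ∧ rP xR b
  | .inl _, .inr _ => False

/-- The order relation of the glued poset `P↗Q` on the disjoint union `P ⊔ Q`:
elements of `P` (resp. `Q`) compare as in `P` (resp. `Q`), an element `a ∈ P` lies below
`b ∈ Q` iff `a ≤ xR` in `P` and `yL ≤ b` in `Q`, and no element of `Q` lies below an
element of `P`. -/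
def glueUp {α β : Type*} (rP : α → α → Prop) (rQ : β → β → Prop) (xR : α) (yL : β) :
    α ⊕ β → α ⊕ β → Prop
  | .inl a, .inl b => rP a b
  | .inr a, .inr b => rQ a b
  | .inl a, .inr b => rP a xR ∧ rQ yL b
  | .inr _, .inl _ => False
section AuxLemmas

lemma wSum_congr {α : Type*} [Fintype α] (r : α → α → Prop) (w : α → R)
    {C C' : Finset α → Prop} (h : ∀ I, C I ↔ C' I) : wSum r w C = wSum r w C' := by
  unfold wSum
  congr 1
  apply Finset.filter_congr
  intro I _
  simp [h I]

lemma isLowerSetRel_glueDown {α β : Type*} [PartialOrder α] [PartialOrder β]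
    (xR : α) (yL : β) (A : Finset α) (B : Finset β) :
    IsLowerSetRel (glueDown (· ≤ · : α → α → Prop) (· ≤ · : β → β → Prop) xR yL)
      (A.disjSum B) ↔
    IsLowerSetRel (· ≤ ·) A ∧ IsLowerSetRel (· ≤ ·) B ∧ (xR ∈ A → yL ∈ B) := by
  constructor
  · intro h
    refine ⟨fun x hx y hyx => ?_, fun x hx y hyx => ?_, fun hxR => ?_⟩
    · have := h (Sum.inl x) (by simp [hx]) (Sum.inl y) hyx
      simpa using this
    · have := h (Sum.inr x) (by simp [hx]) (Sum.inr y) hyx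
      simpa using this
    · have := h (Sum.inl xR) (by simp [hxR]) (Sum.inr yL)
        (show (yL : β) ≤ yL ∧ xR ≤ xR from ⟨le_refl _, le_refl _⟩)
      simpa using this
  · rintro ⟨hA, hB, hg⟩ x hx y hyx
    match x, y with
    | Sum.inl b, Sum.inl a =>
        simp only [Finset.inl_mem_disjSum] at hx ⊢
        exact hA b hx a hyx
    | Sum.inr b, Sum.inr a =>
        simp only [Finset.inr_mem_disjSum] at hx ⊢
        exact hB b hx a hyx
    | Sum.inl b, Sum.inr a =>
        obtain ⟨hayL, hxRb⟩ := hyx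
        simp only [Finset.inl_mem_disjSum] at hx
        simp only [Finset.inr_mem_disjSum]
        exact hB yL (hg (hA b hx xR hxRb)) a hayL
    | Sum.inr b, Sum.inl a => exact absurd hyx not_false

/-- The master gluing identity for `wSum`. -/
lemma wSum_glueDown_eq {α β : Type*} [Fintype α] [Fintype β]
    [PartialOrder α] [PartialOrder β] (wP : α → R) (wQ : β → R) (xR : α) (yL : β)
    (C : Finset (α ⊕ β) → Prop) (CP : Finset α → Prop) (CQ : Finset β → Prop)
    (hC : ∀ (A : Finset α) (B : Finset β), C (A.disjSum B) ↔ CP A ∧ CQ B) :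
    wSum (glueDown (· ≤ · : α → α → Prop) (· ≤ · : β → β → Prop) xR yL)
        (Sum.elim wP wQ) C =
      wSum (· ≤ ·) wP CP * wSum (· ≤ ·) wQ CQ -
        wSum (· ≤ ·) wP (fun A => CP A ∧ xR ∈ A) *
          wSum (· ≤ ·) wQ (fun B => CQ B ∧ yL ∉ B) := by
  classical
  -- product formula for sums over pairs
  have hprod : ∀ (PA : Finset α → Prop) (PB : Finset β → Prop),
      (∑ p ∈ Finset.univ.filter (fun p : Finset α × Finset β =>
          (IsLowerSetRel (· ≤ ·) p.1 ∧ PA p.1) ∧ (IsLowerSetRel (· ≤ ·) p.2 ∧ PB p.2)),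
        (∏ i ∈ p.1, wP i) * ∏ j ∈ p.2, wQ j)
        = wSum (· ≤ ·) wP PA * wSum (· ≤ ·) wQ PB := by
    intro PA PB
    rw [wSum, wSum, Finset.sum_mul_sum, ← Finset.sum_product']
    apply Finset.sum_congr _ (fun _ _ => rfl)
    ext p
    simp [Finset.mem_filter, Finset.mem_product, and_assoc, and_left_comm]
  -- step 1: rewrite the glued sum as a sum over pairs
  have step1 : wSum (glueDown (· ≤ · : α → α → Prop) (· ≤ · : β → β → Prop) xR yL)
        (Sum.elim wP wQ) C =
      ∑ p ∈ Finset.univ.filter (fun p : Finset α × Finset β =>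
          ((IsLowerSetRel (· ≤ ·) p.1 ∧ CP p.1) ∧ (IsLowerSetRel (· ≤ ·) p.2 ∧ CQ p.2))
            ∧ (xR ∈ p.1 → yL ∈ p.2)),
        (∏ i ∈ p.1, wP i) * ∏ j ∈ p.2, wQ j := by
    rw [wSum]
    refine Finset.sum_nbij' (fun I => (I.toLeft, I.toRight))
      (fun p => p.1.disjSum p.2) ?_ ?_ ?_ ?_ ?_
    · intro I hI
      simp only [Finset.mem_filter, Finset.mem_univ, true_and] at hI ⊢
      obtain ⟨hlow, hc⟩ := hI
      rw [← Finset.toLeft_disjSum_toRight (u := I)] at hlow hc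
      rw [isLowerSetRel_glueDown] at hlow
      rw [hC] at hc
      exact ⟨⟨⟨hlow.1, hc.1⟩, hlow.2.1, hc.2⟩, hlow.2.2⟩
    · intro p hp
      simp only [Finset.mem_filter, Finset.mem_univ, true_and] at hp ⊢
      rw [isLowerSetRel_glueDown, hC]
      exact ⟨⟨hp.1.1.1, hp.1.2.1, hp.2⟩, hp.1.1.2, hp.1.2.2⟩
    · intro I _
      exact Finset.toLeft_disjSum_toRight
    · intro p _
      simp
    · intro I _
      rw [← Finset.toLeft_disjSum_toRight (u := I), Finset.prod_disjSum]
      simp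
  rw [step1]
  -- step 2: split according to the gluing condition
  set s := Finset.univ.filter (fun p : Finset α × Finset β =>
      (IsLowerSetRel (· ≤ ·) p.1 ∧ CP p.1) ∧ (IsLowerSetRel (· ≤ ·) p.2 ∧ CQ p.2)) with hs
  have hsplit : Finset.univ.filter (fun p : Finset α × Finset β =>
          ((IsLowerSetRel (· ≤ ·) p.1 ∧ CP p.1) ∧ (IsLowerSetRel (· ≤ ·) p.2 ∧ CQ p.2))
            ∧ (xR ∈ p.1 → yL ∈ p.2))
      = s.filter (fun p => xR ∈ p.1 → yL ∈ p.2) := by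
    rw [hs, Finset.filter_filter]
  rw [hsplit]
  have hsub := Finset.sum_filter_add_sum_filter_not s (fun p => xR ∈ p.1 → yL ∈ p.2)
    (fun p : Finset α × Finset β => (∏ i ∈ p.1, wP i) * ∏ j ∈ p.2, wQ j)
  have h1 : (∑ p ∈ s, (∏ i ∈ p.1, wP i) * ∏ j ∈ p.2, wQ j)
      = wSum (· ≤ ·) wP CP * wSum (· ≤ ·) wQ CQ := hprod CP CQ
  have h2 : (∑ p ∈ s.filter (fun p => ¬(xR ∈ p.1 → yL ∈ p.2)),
        (∏ i ∈ p.1, wP i) * ∏ j ∈ p.2, wQ j)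
      = wSum (· ≤ ·) wP (fun A => CP A ∧ xR ∈ A) *
          wSum (· ≤ ·) wQ (fun B => CQ B ∧ yL ∉ B) := by
    rw [← hprod]
    apply Finset.sum_congr _ (fun _ _ => rfl)
    rw [hs, Finset.filter_filter]
    ext p
    simp only [Finset.mem_filter, Finset.mem_univ, true_and, _root_.not_imp]
    tauto
  rw [← h1, ← h2, eq_sub_iff_add_eq]
  exact hsub

end AuxLemmas

/-- `M_w((P↘Q)↗) = M_w(P↘) · M_w(Q↗)`. -/
theorem upMat_glueDown {α β : Type*} [Fintype α] [Fintype β]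
    [PartialOrder α] [PartialOrder β] (wP : α → R) (wQ : β → R)
    (xL xR : α) (yL yR : β) :
    upMat (glueDown (· ≤ · : α → α → Prop) (· ≤ · : β → β → Prop) xR yL)
        (Sum.elim wP wQ) (Sum.inl xL) (Sum.inr yR) =
      downMat (· ≤ ·) wP xL xR * upMat (· ≤ ·) wQ yL yR := by
  classical
  rw [downMat, upMat, upMat, Matrix.mul_fin_two]
  have e00 := wSum_glueDown_eq wP wQ xR yL
      (fun I => Sum.inr yR ∈ I) (fun _ => True) (fun B => yR ∈ B)
      (fun A B => by simp)
  have e01 := wSum_glueDown_eq wP wQ xR yL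
      (fun I => Sum.inr yR ∉ I) (fun _ => True) (fun B => yR ∉ B)
      (fun A B => by simp)
  have e10 := wSum_glueDown_eq wP wQ xR yL
      (fun I => Sum.inr yR ∈ I ∧ Sum.inl xL ∉ I) (fun A => xL ∉ A) (fun B => yR ∈ B)
      (fun A B => by simp; tauto)
  have e11 := wSum_glueDown_eq wP wQ xR yL
      (fun I => Sum.inr yR ∉ I ∧ Sum.inl xL ∉ I) (fun A => xL ∉ A) (fun B => yR ∉ B)
      (fun A B => by simp; tauto)
  rw [e00, e01, e10, e11]
  have cP1 : wSum (· ≤ ·) wP (fun A => True ∧ xR ∈ A) = wSum (· ≤ ·) wP (fun A => xR ∈ A) :=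
    wSum_congr _ _ (fun I => by simp)
  have cP2 : wSum (· ≤ ·) wP (fun A => xL ∉ A ∧ xR ∈ A)
      = wSum (· ≤ ·) wP (fun A => xR ∈ A ∧ xL ∉ A) :=
    wSum_congr _ _ (fun I => by tauto)
  have cQ1 : wSum (· ≤ ·) wQ (fun B => (yR ∈ B) ∧ yL ∉ B)
      = wSum (· ≤ ·) wQ (fun B => yR ∈ B ∧ yL ∉ B) := rfl
  rw [cP1, cP2]
  congr 1 <;> ring
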